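/- arXiv:1410.4618 — 6 statements merged into one kernel-verified Lean document; each statement's English description precedes it below -/
import Mathlib

section
/- The 2-adic power series T_2(z) = Σ_{n≥1} C_{n-1} z^{-(2n-1)} (where C_k are Catalan numbers) converges for all z in an unramified extension of ℚ_2 with |z|_2 ≥ 2, and its value T_2(z) satisfies T_2(z)^2 − z·T_2(z) + 1 = 0 and 0 < |T_2(z)|_2 ≤ 1/2. -/
/-!
Put `x = z⁻²`, so that the series is `z⁻¹ c` with `c = Σ Cₙ xⁿ`. As `‖Cₙ‖ ≤ 1` and `‖x‖ ≤ 1/4`,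
the terms tend to zero, which in a nonarchimedean setting is enough for convergence inside the
complete field `ℚ₂(z)` (finite-dimensional over `ℚ₂` because `z` is algebraic). Squaring the series
and Catalan's recurrence `Cₙ₊₁ = Σ Cᵢ Cₙ₋ᵢ` give `c = 1 + x c²`, i.e. `w = z⁻¹ c` is a root of
`w² - z w + 1`. Finally `‖c - 1‖ = ‖x c²‖ < 1` forces `‖c‖ = 1`, so `‖w‖ = ‖z‖⁻¹ ∈ (0, 1/2]`.
-/

open Filter Finset IntermediateField

instance IsUltrametricDist.nonarchimedeanRing {R : Type*} [SeminormedRing R]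
    [IsUltrametricDist R] : NonarchimedeanRing R where
  is_nonarchimedean := NonarchimedeanAddGroup.is_nonarchimedean

theorem NonarchimedeanAddGroup.summable_of_tendsto_cofinite_zero_of_isComplete
    {α G : Type*} [AddCommGroup G] [UniformSpace G] [IsUniformAddGroup G]
    [NonarchimedeanAddGroup G] {S : AddSubgroup G} (hS : IsComplete (S : Set G)) {f : α → G}
    (hfS : ∀ a, f a ∈ S) (hf : Tendsto f cofinite (nhds 0)) : Summable f := by
  obtain ⟨c, -, hc⟩ := hS _ (cauchySeq_sum_of_tendsto_cofinite_zero hf)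
    (le_principal_iff.2 (mem_map.2 (univ_mem' fun s => S.sum_mem fun a _ => hfS a)))
  exact ⟨c, hc⟩

theorem IntermediateField.isComplete_adjoin_simple {k K : Type*} [NontriviallyNormedField k]
    [CompleteSpace k] [NormedField K] [NormedAlgebra k K] {z : K} (hz : IsIntegral k z) :
    IsComplete (k⟮z⟯ : Set K) :=
  haveI := adjoin.finiteDimensional hz
  (Subalgebra.toSubmodule k⟮z⟯.toSubalgebra).complete_of_finiteDimensional

theorem catalan_series_eq_one_add_mul_sq {R : Type*} [CommRing R] [UniformSpace R]
    [IsUniformAddGroup R] [NonarchimedeanRing R] [T2Space R] {x c : R}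
    (h : HasSum (fun n => (catalan n : R) * x ^ n) c) : c = 1 + x * c ^ 2 := by
  have hprod := h.mul_of_nonarchimedean h
  have hdiag (n : ℕ) : ∑ kl ∈ antidiagonal n,
      (catalan kl.1 : R) * x ^ kl.1 * ((catalan kl.2 : R) * x ^ kl.2)
        = (catalan (n + 1) : R) * x ^ n := by
    rw [catalan_succ', Nat.cast_sum, sum_mul]
    refine sum_congr rfl fun kl hkl => ?_
    rw [← mem_antidiagonal.1 hkl, pow_add]
    push_cast
    ring
  have hsq : HasSum (fun n => (catalan (n + 1) : R) * x ^ n) (c ^ 2) := by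
    have hsum := summable_sum_mul_antidiagonal_of_summable_mul (A := ℕ)
      (f := fun n => (catalan n : R) * x ^ n) (g := fun n => (catalan n : R) * x ^ n)
      hprod.summable
    rw [sq, ← h.tsum_eq,
      h.summable.tsum_mul_tsum_eq_tsum_sum_antidiagonal h.summable hprod.summable]
    simpa only [hdiag] using hsum.hasSum
  have htail : HasSum (fun n => (catalan (n + 1) : R) * x ^ (n + 1)) (x * c ^ 2) := by
    rw [show (fun n => (catalan (n + 1) : R) * x ^ (n + 1))
        = fun n => x * ((catalan (n + 1) : R) * x ^ n) from funext fun n => by ring]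
    exact hsq.mul_left x
  refine h.unique ((hasSum_nat_add_iff' 1).1 ?_)
  simpa using htail

section CatalanSeries

variable {R : Type*} [NormedCommRing R] [NormOneClass R] [IsUltrametricDist R] {x : R}

theorem norm_catalan_mul_pow_le (n : ℕ) : ‖(catalan n : R) * x ^ n‖ ≤ ‖x‖ ^ n :=
  calc ‖(catalan n : R) * x ^ n‖ ≤ ‖(catalan n : R)‖ * ‖x‖ ^ n :=
        (norm_mul_le _ _).trans (by gcongr; exact norm_pow_le x n)
    _ ≤ ‖x‖ ^ n := mul_le_of_le_one_left (by positivity) (IsUltrametricDist.norm_natCast_le_one R _)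

theorem summable_catalan_mul_pow {S : Subring R} (hS : IsComplete (S : Set R)) (hxS : x ∈ S)
    (hx : ‖x‖ < 1) : Summable (fun n => (catalan n : R) * x ^ n) :=
  NonarchimedeanAddGroup.summable_of_tendsto_cofinite_zero_of_isComplete (S := S.toAddSubgroup) hS
    (fun n => S.mul_mem (natCast_mem S _) (S.pow_mem hxS n))
    (Nat.cofinite_eq_atTop ▸ squeeze_zero_norm norm_catalan_mul_pow_le
      (tendsto_pow_atTop_nhds_zero_of_lt_one (norm_nonneg x) hx))

theorem norm_catalan_series_eq_one {c : R} (hx : ‖x‖ < 1)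
    (h : HasSum (fun n => (catalan n : R) * x ^ n) c) : ‖c‖ = 1 := by
  have hc : ‖c‖ ≤ 1 := h.tsum_eq ▸ IsUltrametricDist.norm_tsum_le_of_forall_le_of_nonneg zero_le_one
    fun n => (norm_catalan_mul_pow_le n).trans (pow_le_one₀ (norm_nonneg x) hx.le)
  have hsub : ‖c - 1‖ < ‖(1 : R)‖ := by
    rw [catalan_series_eq_one_add_mul_sq h, add_sub_cancel_left, norm_one]
    calc ‖x * c ^ 2‖ ≤ ‖x‖ * ‖c‖ ^ 2 := (norm_mul_le _ _).trans (by gcongr; exact norm_pow_le c 2)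
      _ ≤ ‖x‖ * 1 := by gcongr; exact pow_le_one₀ (norm_nonneg c) hc
      _ < 1 := by rwa [mul_one]
  rw [← sub_add_cancel c 1, IsUltrametricDist.norm_add_eq_max_of_norm_ne_norm hsub.ne,
    max_eq_right hsub.le, norm_one]

end CatalanSeries

theorem stmt_8_general (K : Type*) [NormedField K] [IsUltrametricDist K] [NormedAlgebra ℚ_[2] K]
    (halg : Algebra.IsAlgebraic ℚ_[2] K) :
    ∀ z : K, 2 ≤ ‖z‖ →
      ∃ w : K,
        HasSum (fun n : ℕ => (catalan n : K) * (z⁻¹) ^ (2 * n + 1)) w ∧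
        w ^ 2 - z * w + 1 = 0 ∧ 0 < ‖w‖ ∧ ‖w‖ ≤ 1 / 2 := by
  intro z hz
  have hz0 : z ≠ 0 := norm_pos_iff.1 (by linarith)
  have ht : ‖z⁻¹‖ ≤ 1 / 2 := by
    rw [norm_inv, one_div]
    exact inv_anti₀ two_pos hz
  have hx : ‖z⁻¹ ^ 2‖ < 1 := by
    rw [norm_pow]
    nlinarith [norm_nonneg z⁻¹]
  have hxL : z⁻¹ ^ 2 ∈ ℚ_[2]⟮z⟯.toSubalgebra.toSubring :=
    pow_mem (inv_mem (mem_adjoin_simple_self ℚ_[2] z)) 2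
  obtain ⟨c, hc⟩ := summable_catalan_mul_pow
    (isComplete_adjoin_simple (halg.isAlgebraic z).isIntegral) hxL hx
  refine ⟨z⁻¹ * c, ?_, ?_, ?_, ?_⟩
  · rw [show (fun n : ℕ => (catalan n : K) * z⁻¹ ^ (2 * n + 1))
        = fun n => z⁻¹ * ((catalan n : K) * (z⁻¹ ^ 2) ^ n) from funext fun n => by ring]
    exact hc.mul_left z⁻¹
  · linear_combination -catalan_series_eq_one_add_mul_sq hc - c * mul_inv_cancel₀ hz0
  all_goals rw [norm_mul, norm_catalan_series_eq_one hx hc, mul_one]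
  · exact norm_pos_iff.2 (inv_ne_zero hz0)
  · exact ht

/-- The 2-adic series `T_2(z) = Σ_{n≥1} C_{n-1} z^{-(2n-1)}` (Catalan numbers `C_k`)
converges for every `z` with `|z|_2 ≥ 2` in an unramified extension `K` of `ℚ_2`
(a nonarchimedean normed field, algebraic over `ℚ_[2]`, with norm extending the
`2`-adic one and value group that of `ℚ_2`), and its sum `w = T_2(z)` satisfies
`w^2 - z w + 1 = 0` and `0 < |w|_2 ≤ 1/2`. -/
theorem stmt_8 (K : Type*) [NormedField K] [IsUltrametricDist K] [NormedAlgebra ℚ_[2] K]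
    (halg : Algebra.IsAlgebraic ℚ_[2] K)
    (hiso : ∀ q : ℚ_[2], ‖algebraMap ℚ_[2] K q‖ = ‖q‖)
    (hval : ∀ x : K, x ≠ 0 → ∃ n : ℤ, ‖x‖ = 2 ^ n) :
    ∀ z : K, 2 ≤ ‖z‖ →
      ∃ w : K,
        HasSum (fun n : ℕ => (catalan n : K) * (z⁻¹) ^ (2 * n + 1)) w ∧
        w ^ 2 - z * w + 1 = 0 ∧ 0 < ‖w‖ ∧ ‖w‖ ≤ 1 / 2 :=
  stmt_8_general K halg
end

section
/- For z in a 2-adic field with |z|_2 ≥ 2, the two roots of x² − z x + 1 = 0 are T_2(z) and z − T_2(z) = 1/T_2(z), and exactly one of them (namely T_2(z)) is a 2-adic integer. -/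
/-!
With `x = z⁻²`, `z * T₂(z)` is the Catalan series `C(x) = ∑ Cₙ xⁿ`, and the recursion
`Cₙ₊₁ = ∑ᵢ₊ⱼ₌ₙ Cᵢ Cⱼ` gives `C = 1 + x C²` for the sums: in an ultrametric ring the product of
two truncations differs from the truncated Cauchy product only by terms of norm `≤ |x|ᴺ`, so no
completeness or absolute convergence is needed. Hence `T₂(z)` solves `w² - z w + 1 = 0`, and
Vieta gives the other root `z - T₂(z) = T₂(z)⁻¹`. Every term of the series has norm `≤ |z|⁻¹`,
so `|T₂(z)| ≤ 1/2`, while `|z - T₂(z)| = |z| ≥ 2`.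
-/

open Finset Filter Topology

namespace IsUltrametricDist

variable {R : Type*} [SeminormedRing R] [IsUltrametricDist R]

theorem norm_sum_range_mul_sum_range_sub_sum_antidiagonal_le {a b : ℕ → R} {r : ℝ}
    (hr₀ : 0 ≤ r) (hr₁ : r ≤ 1) (ha : ∀ n, ‖a n‖ ≤ r ^ n) (hb : ∀ n, ‖b n‖ ≤ r ^ n) (N : ℕ) :
    ‖(∑ i ∈ range N, a i) * (∑ j ∈ range N, b j) -
        ∑ n ∈ range N, ∑ p ∈ antidiagonal n, a p.1 * b p.2‖ ≤ r ^ N := by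
  have hdiag : ∑ n ∈ range N, ∑ p ∈ antidiagonal n, a p.1 * b p.2 =
      ∑ i ∈ range N, a i * ∑ j ∈ range (N - i), b j := by
    simp only [Nat.sum_antidiagonal_eq_sum_range_succ (fun i j => a i * b j), mul_sum]
    exact sum_range_diag_flip N fun i j => a i * b j
  have htail : ∀ i ∈ range N, ‖∑ j ∈ Ico (N - i) N, b j‖ ≤ r ^ (N - i) :=
    fun i _ => norm_sum_le_of_forall_le_of_nonneg (pow_nonneg hr₀ _) fun j hj =>
      (hb j).trans (pow_le_pow_of_le_one hr₀ hr₁ (mem_Ico.1 hj).1)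
  rw [hdiag, sum_mul, ← sum_sub_distrib]
  refine norm_sum_le_of_forall_le_of_nonneg (pow_nonneg hr₀ _) fun i hi => ?_
  rw [← mul_sub, ← sum_Ico_eq_sub _ (Nat.sub_le N i)]
  calc ‖a i * ∑ j ∈ Ico (N - i) N, b j‖ ≤ r ^ i * r ^ (N - i) :=
        (norm_mul_le _ _).trans (mul_le_mul (ha i) (htail i hi) (norm_nonneg _) (pow_nonneg hr₀ _))
    _ = r ^ N := by rw [← pow_add, Nat.add_sub_cancel' (mem_range.1 hi).le]

theorem tendsto_sum_range_sum_antidiagonal_mul {a b : ℕ → R} {A B : R} {r : ℝ}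
    (hr₀ : 0 ≤ r) (hr₁ : r < 1) (ha : ∀ n, ‖a n‖ ≤ r ^ n) (hb : ∀ n, ‖b n‖ ≤ r ^ n)
    (hA : Tendsto (fun N => ∑ i ∈ range N, a i) atTop (𝓝 A))
    (hB : Tendsto (fun N => ∑ j ∈ range N, b j) atTop (𝓝 B)) :
    Tendsto (fun N => ∑ n ∈ range N, ∑ p ∈ antidiagonal n, a p.1 * b p.2) atTop (𝓝 (A * B)) := by
  have herr := squeeze_zero_norm
    (norm_sum_range_mul_sum_range_sub_sum_antidiagonal_le hr₀ hr₁.le ha hb)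
    (tendsto_pow_atTop_nhds_zero_of_lt_one hr₀ hr₁)
  simpa only [sub_sub_cancel, sub_zero] using (hA.mul hB).sub herr

end IsUltrametricDist

theorem sum_antidiagonal_catalan_mul_pow {R : Type*} [CommSemiring R] (x : R) (n : ℕ) :
    ∑ p ∈ antidiagonal n, (catalan p.1 : R) * x ^ p.1 * ((catalan p.2 : R) * x ^ p.2) =
      catalan (n + 1) * x ^ n := by
  rw [catalan_succ', Nat.cast_sum, sum_mul]
  refine sum_congr rfl fun p hp => ?_
  rw [← mem_antidiagonal.1 hp]
  push_cast
  ring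

section Catalan

variable {R : Type*} [NormedCommRing R] [NormOneClass R] [IsUltrametricDist R]

theorem mul_sq_sub_add_one_eq_zero_of_hasSum_catalan {x S : R} (hx : ‖x‖ < 1)
    (hS : HasSum (fun n => (catalan n : R) * x ^ n) S) : x * S ^ 2 - S + 1 = 0 := by
  have hbound (n : ℕ) : ‖(catalan n : R) * x ^ n‖ ≤ ‖x‖ ^ n :=
    calc ‖(catalan n : R) * x ^ n‖ ≤ 1 * ‖x‖ ^ n := (norm_mul_le _ _).trans <|
          mul_le_mul (IsUltrametricDist.norm_natCast_le_one R _) (norm_pow_le x n)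
            (norm_nonneg _) zero_le_one
      _ = ‖x‖ ^ n := one_mul _
  have hP := hS.tendsto_sum_nat
  have hsq := (IsUltrametricDist.tendsto_sum_range_sum_antidiagonal_mul (norm_nonneg x) hx
    hbound hbound hP hP).const_mul x
  have hshift (N : ℕ) : x * ∑ n ∈ range N, ∑ p ∈ antidiagonal n,
      (catalan p.1 : R) * x ^ p.1 * ((catalan p.2 : R) * x ^ p.2) =
      ∑ n ∈ range (N + 1), (catalan n : R) * x ^ n - 1 := by
    simp only [sum_antidiagonal_catalan_mul_pow, sum_range_succ', mul_sum]
    simp only [catalan_zero, Nat.cast_one, pow_zero, mul_one, add_sub_cancel_right, pow_succ]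
    exact sum_congr rfl fun n _ => by ring
  simp only [hshift] at hsq
  have hlim := tendsto_nhds_unique hsq
    (((tendsto_add_atTop_iff_nat 1).2 hP).sub_const 1)
  linear_combination hlim

end Catalan

section Field

variable {K : Type*} [NormedField K] [IsUltrametricDist K]

theorem sq_sub_mul_add_one_eq_zero_of_hasSum_catalan {z w : K} (hz : 1 < ‖z‖)
    (hw : HasSum (fun n : ℕ => (catalan n : K) * z⁻¹ ^ (2 * n + 1)) w) :
    w ^ 2 - z * w + 1 = 0 := by
  have hz₀ : z ≠ 0 := norm_pos_iff.1 (zero_lt_one.trans hz)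
  have hx : ‖z⁻¹ ^ 2‖ < 1 := by
    rw [norm_pow, norm_inv]
    exact pow_lt_one₀ (by positivity) (inv_lt_one_of_one_lt₀ hz) two_ne_zero
  have hS : HasSum (fun n : ℕ => (catalan n : K) * (z⁻¹ ^ 2) ^ n) (z * w) := by
    refine (hw.mul_left z).congr_fun fun n => ?_
    rw [← pow_mul, pow_succ]
    field_simp
  have h := mul_sq_sub_add_one_eq_zero_of_hasSum_catalan hx hS
  field_simp at h
  linear_combination h

theorem norm_le_of_hasSum_catalan {z w : K} (hz : 1 ≤ ‖z‖)
    (hw : HasSum (fun n : ℕ => (catalan n : K) * z⁻¹ ^ (2 * n + 1)) w) : ‖w‖ ≤ ‖z‖⁻¹ := by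
  rw [← hw.tsum_eq, ← norm_inv]
  have hz' : ‖z⁻¹‖ ≤ 1 := by rw [norm_inv]; exact inv_le_one_of_one_le₀ hz
  refine IsUltrametricDist.norm_tsum_le_of_forall_le_of_nonneg (norm_nonneg _) fun n => ?_
  calc ‖(catalan n : K) * z⁻¹ ^ (2 * n + 1)‖ ≤ 1 * ‖z⁻¹‖ ^ 1 := by
        rw [norm_mul, norm_pow]
        exact mul_le_mul (IsUltrametricDist.norm_natCast_le_one K _)
          (pow_le_pow_of_le_one (norm_nonneg _) hz' (by omega)) (by positivity) zero_le_one
    _ = ‖z⁻¹‖ := by ring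

end Field

theorem stmt_9_general (K : Type*) [NormedField K] [IsUltrametricDist K]
    (z w : K) (hz : 2 ≤ ‖z‖)
    (hw : HasSum (fun n : ℕ => (catalan n : K) * (z⁻¹) ^ (2 * n + 1)) w) :
    w ^ 2 - z * w + 1 = 0 ∧ (z - w) ^ 2 - z * (z - w) + 1 = 0 ∧
    z - w = w⁻¹ ∧
    (∀ x : K, x ^ 2 - z * x + 1 = 0 → x = w ∨ x = z - w) ∧
    ‖w‖ ≤ 1 ∧ ¬ ‖z - w‖ ≤ 1 := by
  have hroot := sq_sub_mul_add_one_eq_zero_of_hasSum_catalan (by linarith) hw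
  have hvieta : w * (z - w) = 1 := by linear_combination -hroot
  have hw₁ : ‖w‖ ≤ 1 :=
    (norm_le_of_hasSum_catalan (by linarith) hw).trans (inv_le_one_of_one_le₀ (by linarith))
  refine ⟨hroot, by linear_combination hroot, eq_inv_of_mul_eq_one_right hvieta, ?_, hw₁, ?_⟩
  · intro x hx
    have hfactor : (x - w) * (x - (z - w)) = 0 := by linear_combination hx - hroot
    simpa only [mul_eq_zero, sub_eq_zero] using hfactor
  · intro hzw
    have hz_le := IsUltrametricDist.norm_add_le_max (z - w) w
    rw [sub_add_cancel] at hz_le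
    linarith [max_le hzw hw₁]

/-- For `z` in a 2-adic field with `|z|_2 ≥ 2`, the two roots of `x^2 - z x + 1 = 0`
are `T_2(z)` (the sum of the Catalan series) and `z - T_2(z) = 1/T_2(z)`, and exactly
one of them, namely `T_2(z)`, is a 2-adic integer. -/
theorem stmt_9 (K : Type*) [NormedField K] [IsUltrametricDist K] [NormedAlgebra ℚ_[2] K]
    (halg : Algebra.IsAlgebraic ℚ_[2] K)
    (hiso : ∀ q : ℚ_[2], ‖algebraMap ℚ_[2] K q‖ = ‖q‖)
    (hval : ∀ x : K, x ≠ 0 → ∃ n : ℤ, ‖x‖ = 2 ^ n)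
    (z w : K) (hz : 2 ≤ ‖z‖)
    (hw : HasSum (fun n : ℕ => (catalan n : K) * (z⁻¹) ^ (2 * n + 1)) w) :
    w ^ 2 - z * w + 1 = 0 ∧ (z - w) ^ 2 - z * (z - w) + 1 = 0 ∧
    z - w = w⁻¹ ∧
    (∀ x : K, x ^ 2 - z * x + 1 = 0 → x = w ∨ x = z - w) ∧
    ‖w‖ ≤ 1 ∧ ¬ ‖z - w‖ ≤ 1 :=
  stmt_9_general K z w hz hw
end

section
/- With f(x,y) = y^4(x-1)^4 + 8x(x^2+1), the iterated resultants defined by R^{(1)}(x,x_1) = f(x,x_1) and R^{(k)}(x,x_k) = Res_{x_{k-1}}(R^{(k-1)}(x,x_{k-1}), f(x_{k-1},x_k)) satisfy R^{(n)}(x,x_n) ≡ x_n^{4^n}(x+1)^{4^n} (mod 2) for all n ≥ 1; in particular R_n(x) := R^{(n)}(x,x) ≡ x^{4^n}(x+1)^{4^n} (mod 2). -/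
/-!
Modulo 2 we have `f(x, y) ≡ y⁴ (x+1)⁴`, so `f(x_{k-1}, x_k) ≡ x_k⁴ (x_{k-1}+1)⁴`. If
`R⁽ᵏ⁾ ≡ c · x_k^N` with `c = (x+1)^N`, then `Res_{x_k}(c · x_k^N, x_{k+1}⁴ (x_k+1)⁴) = c⁴ x_{k+1}^{4N}`,
and the claim follows by induction. Reduction mod 2 commutes with the resultant only if it
preserves both degrees, so the induction also carries `deg R⁽ᵏ⁾ = 4ᵏ`: the upper bound holds
because only the `N` Sylvester columns filled with coefficients of `f(x_k, x_{k+1})` involve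
`x_{k+1}`, each to degree at most 4, and the lower bound is read off the reduction.
-/

open Polynomial

/-- The Sylvester matrix of `p` and `q`, regarded as polynomials of degrees `m`
and `n` respectively: the first `n` rows are shifted copies of the coefficients of
`p`, the remaining `m` rows are shifted copies of the coefficients of `q`. -/
def sylvesterMatrix {R : Type*} [CommRing R] (p q : Polynomial R) (m n : ℕ) :
    Matrix (Fin (m + n)) (Fin (m + n)) R :=
  Matrix.of fun i j =>
    if (i : ℕ) < n then
      (if (i : ℕ) ≤ (j : ℕ) ∧ (j : ℕ) ≤ m + (i : ℕ) then p.coeff (m + (i : ℕ) - j) else 0)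
    else
      (if (i : ℕ) - n ≤ (j : ℕ) ∧ (j : ℕ) ≤ n + ((i : ℕ) - n) then
        q.coeff (n + ((i : ℕ) - n) - j) else 0)

/-- The resultant of two polynomials, as the determinant of their Sylvester matrix. -/
noncomputable def resultant {R : Type*} [CommRing R] (p q : Polynomial R) : R :=
  (sylvesterMatrix p q p.natDegree q.natDegree).det

/-- `f(x, x₁) = x₁^4 (x-1)^4 + 8x(x²+1)` as a polynomial in `x₁` (outer variable)
over `ℤ[x]`.  This is `R⁽¹⁾(x, x₁)`. -/
noncomputable def fIter : Polynomial (Polynomial ℤ) :=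
  X ^ 4 * C ((X - 1) ^ 4) + C (8 * X * (X ^ 2 + 1))

/-- `f(x_{k-1}, x_k)` viewed as a polynomial in the resultant variable `x_{k-1}`
(outer variable) with coefficients in `ℤ[x][x_k]`. -/
noncomputable def fRes : Polynomial (Polynomial (Polynomial ℤ)) :=
  C ((X : Polynomial (Polynomial ℤ)) ^ 4) * (X - 1) ^ 4 + 8 * X * (X ^ 2 + 1)

/-- The iterated resultants: `RIter 0 = R⁽¹⁾(x, x₁) = f(x, x₁)`, and
`RIter k = R⁽ᵏ⁺¹⁾(x, x_{k+1}) = Res_{x_k}(R⁽ᵏ⁾(x, x_k), f(x_k, x_{k+1}))`.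
`RIter (n-1)` is a polynomial in `x_n` (outer variable) over `ℤ[x]`. -/
noncomputable def RIter : ℕ → Polynomial (Polynomial ℤ)
  | 0 => fIter
  | k + 1 => _root_.resultant ((RIter k).map (C : Polynomial ℤ →+* Polynomial (Polynomial ℤ))) fRes

theorem sylvesterMatrix_eq_transpose_submatrix {R : Type*} [CommRing R] (p q : R[X]) (m n : ℕ) :
    sylvesterMatrix p q m n = ((p.sylvester q m n).submatrix Fin.rev Fin.rev).transpose := by
  ext i j
  simp only [sylvesterMatrix, Matrix.of_apply, Matrix.transpose_apply, Matrix.submatrix_apply,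
    Polynomial.sylvester]
  have hi := i.isLt
  have hj := j.isLt
  rcases lt_or_ge (i : ℕ) n with hin | hin
  · have hrev : Fin.rev i = Fin.natAdd m ⟨n - 1 - i, by omega⟩ := by ext; simp; omega
    rw [hrev, Fin.addCases_right]
    simp only [hin, if_true, Set.mem_Icc, Fin.val_rev]
    split_ifs <;> first | omega | (congr 1 <;> omega)
  · have hrev : Fin.rev i = Fin.castAdd n ⟨m + n - 1 - i, by omega⟩ := by ext; simp; omega
    rw [hrev, Fin.addCases_left]
    simp only [hin.not_gt, if_false, Set.mem_Icc, Fin.val_rev]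
    split_ifs <;> first | omega | (congr 1 <;> omega)

theorem resultant_eq_polynomial_resultant {R : Type*} [CommRing R] (p q : R[X]) :
    _root_.resultant p q = p.resultant q := by
  rw [_root_.resultant, sylvesterMatrix_eq_transpose_submatrix, Matrix.det_transpose,
    Polynomial.resultant]
  exact Matrix.det_submatrix_equiv_self Fin.revPerm _

theorem Matrix.natDegree_det_le_sum {ι A : Type*} [Fintype ι] [DecidableEq ι] [CommRing A]
    (M : Matrix ι ι A[X]) (d : ι → ℕ) (h : ∀ i j, (M i j).natDegree ≤ d j) :
    M.det.natDegree ≤ ∑ j, d j := by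
  rw [Matrix.det_apply]
  refine natDegree_sum_le_of_forall_le _ _ fun σ _ => ?_
  calc (Equiv.Perm.sign σ • ∏ i, M (σ i) i).natDegree ≤ (∏ i, M (σ i) i).natDegree := by
        rcases Int.units_eq_one_or (Equiv.Perm.sign σ) with hσ | hσ <;> simp [hσ]
    _ ≤ ∑ i, (M (σ i) i).natDegree := natDegree_prod_le _ _
    _ ≤ ∑ i, d i := Finset.sum_le_sum fun i _ => h _ _

theorem Polynomial.natDegree_resultant_le {A : Type*} [CommRing A] (f g : A[X][X]) (m n a b : ℕ)
    (hf : ∀ i, (f.coeff i).natDegree ≤ a) (hg : ∀ i, (g.coeff i).natDegree ≤ b) :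
    (f.resultant g m n).natDegree ≤ m * b + n * a := by
  refine (Matrix.natDegree_det_le_sum _ (Fin.addCases (fun _ => b) (fun _ => a)) ?_).trans ?_
  · intro i j
    induction j using Fin.addCases <;>
      simp only [sylvester, Matrix.of_apply, Fin.addCases_left, Fin.addCases_right] <;>
      split_ifs <;> simp [hf, hg]
  · simp [Fin.sum_univ_add]

theorem natDegree_X_pow_mul_C_add_one_pow {R : Type*} [CommSemiring R] [Nontrivial R] (N : ℕ) :
    (X ^ N * C ((X + 1) ^ N : R[X])).natDegree = N := by
  rw [mul_comm, natDegree_C_mul_X_pow _ _ (by simpa using ((monic_X_add_C (1 : R)).pow N).ne_zero)]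

theorem CharTwo.eight_eq_zero {R : Type*} [Semiring R] [CharP R 2] : (8 : R) = 0 := by
  rw [show (8 : R) = 2 * 4 by norm_num, CharTwo.two_eq_zero, zero_mul]

theorem map_fIter :
    fIter.map (mapRingHom (Int.castRingHom (ZMod 2))) = X ^ 4 * C ((X + 1) ^ 4) := by
  simp [fIter, CharTwo.sub_eq_add, CharTwo.eight_eq_zero]

theorem map_fRes :
    fRes.map (mapRingHom (mapRingHom (Int.castRingHom (ZMod 2)))) = C (X ^ 4) * (X + 1) ^ 4 := by
  simp [fRes, CharTwo.sub_eq_add, CharTwo.eight_eq_zero]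

theorem natDegree_fIter : fIter.natDegree = 4 := by
  unfold fIter
  compute_degree!
  exact X_sub_C_ne_zero 1

theorem natDegree_fRes : fRes.natDegree = 4 := by
  unfold fRes
  compute_degree!

theorem natDegree_coeff_fRes_le (i : ℕ) : (fRes.coeff i).natDegree ≤ 4 := by
  have hfRes : fRes = C (X ^ 4) * ((X - 1) ^ 4 : ℤ[X]).map (Int.castRingHom _) +
      (8 * X * (X ^ 2 + 1) : ℤ[X]).map (Int.castRingHom _) := by
    simp [fRes]
  rw [hfRes, coeff_add, coeff_C_mul, coeff_map, coeff_map, eq_intCast, eq_intCast]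
  refine (natDegree_add_le _ _).trans ?_
  simp only [natDegree_intCast, max_le_iff, zero_le, and_true]
  exact natDegree_mul_le.trans (by simp)

theorem map_RIter_succ {k N : ℕ} (hdeg : (RIter k).natDegree = N)
    (hmap : (RIter k).map (mapRingHom (Int.castRingHom (ZMod 2))) = X ^ N * C ((X + 1) ^ N)) :
    (RIter (k + 1)).map (mapRingHom (Int.castRingHom (ZMod 2))) =
      X ^ (4 * N) * C ((X + 1) ^ (4 * N)) := by
  set ψ := mapRingHom (Int.castRingHom (ZMod 2))
  have hP : ((RIter k).map C).map (mapRingHom ψ) = C (C ((X + 1) ^ N)) * X ^ N := by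
    rw [Polynomial.map_map, mapRingHom_comp_C, ← Polynomial.map_map, hmap]
    rw [Polynomial.map_mul, Polynomial.map_pow, map_X, map_C]
    ring
  have hfRes : (C (X ^ 4) * (X + 1) ^ 4 : (ZMod 2)[X][X][X]).natDegree ≤ 4 := by
    compute_degree
  rw [RIter, resultant_eq_polynomial_resultant, natDegree_map_eq_of_injective C_injective, hdeg,
    natDegree_fRes, ← coe_mapRingHom, ← resultant_map_map, hP, map_fRes, resultant_C_mul_left,
    resultant_X_pow_left _ _ _ hfRes]
  rw [coeff_zero_eq_eval_zero]
  simp only [map_pow, map_add, map_one, eval_mul, eval_pow, eval_C, eval_add, eval_X, eval_one,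
    zero_add, one_pow, mul_one]
  ring

theorem natDegree_RIter_succ_le {k N : ℕ} (hdeg : (RIter k).natDegree = N) :
    (RIter (k + 1)).natDegree ≤ 4 * N := by
  rw [RIter, resultant_eq_polynomial_resultant, natDegree_map_eq_of_injective C_injective, hdeg,
    natDegree_fRes]
  refine (natDegree_resultant_le _ _ N 4 0 4 (fun i => ?_) natDegree_coeff_fRes_le).trans_eq
    (by ring)
  simp [coeff_map]

theorem map_RIter_and_natDegree (k : ℕ) :
    (RIter k).map (mapRingHom (Int.castRingHom (ZMod 2))) =
        X ^ 4 ^ (k + 1) * C ((X + 1) ^ 4 ^ (k + 1)) ∧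
      (RIter k).natDegree = 4 ^ (k + 1) := by
  induction k with
  | zero => exact ⟨map_fIter, natDegree_fIter⟩
  | succ k ih =>
    obtain ⟨hmap, hdeg⟩ := ih
    have hmap' := map_RIter_succ hdeg hmap
    rw [← pow_succ'] at hmap'
    refine ⟨hmap', le_antisymm ((natDegree_RIter_succ_le hdeg).trans_eq (pow_succ' 4 _).symm) ?_⟩
    calc 4 ^ (k + 2) = ((RIter (k + 1)).map (mapRingHom (Int.castRingHom (ZMod 2)))).natDegree := by
          rw [hmap', natDegree_X_pow_mul_C_add_one_pow]
      _ ≤ (RIter (k + 1)).natDegree := natDegree_map_le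

/-- For all `n ≥ 1`, `R⁽ⁿ⁾(x, x_n) ≡ x_n^{4ⁿ} (x+1)^{4ⁿ} (mod 2)`; in particular
`R_n(x) = R⁽ⁿ⁾(x, x) ≡ x^{4ⁿ} (x+1)^{4ⁿ} (mod 2)`. -/
theorem stmt_12 (n : ℕ) (hn : 1 ≤ n) :
    (RIter (n - 1)).map (mapRingHom (Int.castRingHom (ZMod 2))) =
        X ^ 4 ^ n * C (((X : (ZMod 2)[X]) + 1) ^ 4 ^ n) ∧
    ((RIter (n - 1)).eval (X : Polynomial ℤ)).map (Int.castRingHom (ZMod 2)) =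
        X ^ 4 ^ n * ((X : (ZMod 2)[X]) + 1) ^ 4 ^ n := by
  obtain ⟨k, rfl⟩ := Nat.exists_eq_add_of_le' hn
  rw [Nat.add_sub_cancel]
  have hmap := (map_RIter_and_natDegree k).1
  refine ⟨hmap, ?_⟩
  have heval := eval_map_apply (p := RIter k) (f := mapRingHom (Int.castRingHom (ZMod 2))) X
  rw [coe_mapRingHom, map_X, hmap] at heval
  simpa using heval.symm
end

section
/- For n ≥ 1, the iterated resultant R_n(x) of f(x,y) = y^4(x-1)^4 + 8x(x^2+1) is a monic polynomial in ℤ[x] of degree 2·4^n. -/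
open Polynomial

/-!
Track the shape of `R⁽ᵏ⁾(x, y)`: its degree in each variable is at most `D = 4ᵏ`, and its part of
`x`-degree `D` is exactly `x^D y^D` (`CornerMonic D`). This shape survives the resultant with
`f(x_k, y)`, with `D` replaced by `4D`: in the Sylvester determinant the rows built from `R⁽ᵏ⁾`
have `x`-degree `≤ D` and `y`-degree `0`, the rows built from `f` have `x`-degree `0` and `y`-degree
`≤ 4`, and the top `x`-part of the determinant is the determinant of a lower triangular matrix with
diagonal `1, …, 1, y⁴, …, y⁴` (as `f(0, y) = y⁴`). On the diagonal `y = x` the monomial `x^D y^D`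
is then the only contribution to degree `2D`.
-/

open Polynomial.Bivariate Finset

theorem Polynomial.coeff_prod_sum_of_natDegree_le {R ι : Type*} [CommSemiring R] (s : Finset ι)
    (f : ι → R[X]) (w : ι → ℕ) (h : ∀ i ∈ s, (f i).natDegree ≤ w i) :
    (∏ i ∈ s, f i).coeff (∑ i ∈ s, w i) = ∏ i ∈ s, (f i).coeff (w i) := by
  classical
  induction s using Finset.induction_on with
  | empty => simp
  | insert a s ha ih =>
    have hs : ∀ i ∈ s, (f i).natDegree ≤ w i := fun i hi => h i (mem_insert_of_mem hi)
    rw [prod_insert ha, sum_insert ha, prod_insert ha, ← ih hs,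
      coeff_mul_add_eq_of_natDegree_le (h a (mem_insert_self a s))
        ((natDegree_prod_le _ _).trans (sum_le_sum hs))]

namespace Matrix

variable {R n : Type*} [CommRing R] [Fintype n] [DecidableEq n] (N : Matrix n n R[X]) (w : n → ℕ)

theorem natDegree_det_le_sum_s14 (h : ∀ i j, (N i j).natDegree ≤ w i) :
    N.det.natDegree ≤ ∑ i, w i := by
  rw [det_apply']
  refine natDegree_sum_le_of_forall_le _ _ fun σ _ => ?_
  refine natDegree_mul_le.trans ?_
  rw [natDegree_intCast, zero_add]
  exact (natDegree_prod_le _ _).trans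
    ((sum_le_sum fun i _ => h (σ i) i).trans (Equiv.sum_comp σ w).le)

theorem coeff_det_sum_eq_det (h : ∀ i j, (N i j).natDegree ≤ w i) :
    N.det.coeff (∑ i, w i) = (of fun i j => (N i j).coeff (w i)).det := by
  simp only [det_apply', finsetSum_coeff, of_apply]
  refine sum_congr rfl fun σ _ => ?_
  rw [coeff_intCast_mul, ← Equiv.sum_comp σ w,
    coeff_prod_sum_of_natDegree_le _ _ _ fun i _ => h (σ i) i]

end Matrix

@[to_additive]
theorem Fin.prod_ite_val_lt {M : Type*} [CommMonoid M] (m n : ℕ) (a b : M) :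
    ∏ i : Fin (m + n), (if (i : ℕ) < n then a else b) = a ^ n * b ^ m := by
  rw [prod_ite, Finset.prod_const, Finset.prod_const, filter_not,
    card_sdiff_of_subset (filter_subset _ _), Fin.card_filter_val_lt]
  simp

namespace Polynomial.Bivariate

variable {R : Type*} [CommSemiring R]

theorem coeff_coeff_swap (p : R[X][Y]) (i j : ℕ) :
    ((swap p).coeff i).coeff j = (p.coeff j).coeff i := by
  induction p using Polynomial.induction_on' with
  | add p q hp hq => simp [hp, hq]
  | monomial n a =>
    induction a using Polynomial.induction_on' with
    | add a b ha hb => simp_all [(monomial n).map_add]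
    | monomial m r =>
      simp only [swap_monomial_monomial, coeff_monomial]
      split_ifs <;> simp_all [coeff_monomial]

theorem natDegree_coeff_le_of_natDegree_swap_le {p : R[X][Y]} {D : ℕ}
    (h : (swap p).natDegree ≤ D) (j : ℕ) : (p.coeff j).natDegree ≤ D :=
  natDegree_le_iff_coeff_eq_zero.mpr fun i hi => by
    rw [← coeff_coeff_swap, coeff_eq_zero_of_natDegree_lt (h.trans_lt hi), coeff_zero]

end Polynomial.Bivariate

theorem sylvesterMatrix_apply {R : Type*} [CommRing R] (p q : R[X]) (m n : ℕ)
    (i j : Fin (m + n)) :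
    sylvesterMatrix p q m n i j =
      if (i : ℕ) < n then
        (if (i : ℕ) ≤ j ∧ (j : ℕ) ≤ m + i then p.coeff (m + i - j) else 0)
      else
        (if (i : ℕ) - n ≤ j ∧ (j : ℕ) ≤ i then q.coeff (i - j) else 0) := by
  simp only [sylvesterMatrix, Matrix.of_apply]
  by_cases hi : (i : ℕ) < n
  · simp only [if_pos hi]
  · simp only [if_neg hi, Nat.add_sub_cancel' (not_lt.mp hi)]

section SylvesterMap

variable {R : Type*} [CommRing R]

theorem sylvesterMatrix_map_apply (P Q : R[X][Y]) (m n : ℕ) (i j : Fin (m + n)) :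
    sylvesterMatrix (P.map (C : R[X] →+* R[X][Y])) (Q.map (mapRingHom C)) m n i j =
      if (i : ℕ) < n then
        (if (i : ℕ) ≤ j ∧ (j : ℕ) ≤ m + i then C (P.coeff (m + i - j)) else 0)
      else
        (if (i : ℕ) - n ≤ j ∧ (j : ℕ) ≤ i then (Q.coeff (i - j)).map C else 0) := by
  simp only [sylvesterMatrix_apply, coeff_map, coe_mapRingHom]

theorem natDegree_det_sylvesterMatrix_map_le {P Q : R[X][Y]} {m n : ℕ}
    (hQ : ∀ t, (Q.coeff t).natDegree ≤ n) :
    (sylvesterMatrix (P.map (C : R[X] →+* R[X][Y])) (Q.map (mapRingHom C)) m n).det.natDegree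
      ≤ m * n := by
  refine (Matrix.natDegree_det_le_sum_s14 _ (fun i : Fin (m + n) => if (i : ℕ) < n then 0 else n)
    fun i j => ?_).trans_eq (by simp [Fin.sum_ite_val_lt])
  rw [sylvesterMatrix_map_apply]
  split_ifs <;> first | exact natDegree_map_le.trans (hQ _) | simp

end SylvesterMap

/-- `P = x^D y^D + (terms of x-degree < D)` with `y`-degree `≤ D`, where `x` is the inner and `y`
the outer variable; `swap P` has `x` as outer variable. -/
def CornerMonic {R : Type*} [CommSemiring R] (D : ℕ) (P : R[X][Y]) : Prop :=
  P.natDegree ≤ D ∧ (swap P).natDegree ≤ D ∧ (swap P).coeff D = X ^ D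

namespace CornerMonic

variable {R : Type*} [CommRing R] {D : ℕ} {P : R[X][Y]}

theorem natDegree_coeff_le (hP : CornerMonic D P) (j : ℕ) : (P.coeff j).natDegree ≤ D :=
  natDegree_coeff_le_of_natDegree_swap_le hP.2.1 j

theorem coeff_coeff (hP : CornerMonic D P) (j : ℕ) :
    (P.coeff j).coeff D = if j = D then 1 else 0 := by
  rw [← coeff_coeff_swap, hP.2.2, coeff_X_pow]

theorem natDegree_eq [Nontrivial R] (hP : CornerMonic D P) : P.natDegree = D := by
  refine le_antisymm hP.1 (le_natDegree_of_ne_zero fun h => ?_)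
  simpa [h] using hP.coeff_coeff D

theorem resultant_map [Nontrivial R] {e : ℕ} {Q : R[X][Y]} (hP : CornerMonic D P)
    (hQ : Q.natDegree = e) (hQswap : (swap Q).natDegree ≤ e) (hQ0 : Q.coeff 0 = X ^ e) :
    CornerMonic (e * D)
      (_root_.resultant (P.map (C : R[X] →+* R[X][Y])) (Q.map (mapRingHom C))) := by
  have hS := sylvesterMatrix_map_apply P Q D e
  set S := sylvesterMatrix (P.map (C : R[X] →+* R[X][Y])) (Q.map (mapRingHom C)) D e
  have hres :
      _root_.resultant (P.map (C : R[X] →+* R[X][Y])) (Q.map (mapRingHom C)) = S.det := by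
    rw [_root_.resultant, natDegree_map_eq_of_injective C_injective, hP.natDegree_eq,
      natDegree_map_eq_of_injective (map_injective _ C_injective), hQ]
  have hx (i j : Fin (D + e)) :
      (swap.mapMatrix S i j).natDegree ≤ if (i : ℕ) < e then D else 0 := by
    rw [AlgEquiv.mapMatrix_apply, Matrix.map_apply, hS]
    split_ifs <;> simp only [swap_C, swap_map_C, map_zero, natDegree_C, natDegree_zero, le_refl,
      zero_le, natDegree_map_le.trans (hP.natDegree_coeff_le _)]
  have hsum : ∑ i : Fin (D + e), (if (i : ℕ) < e then D else 0) = e * D := by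
    simp [Fin.sum_ite_val_lt]
  have htop (i j : Fin (D + e)) :
      (swap.mapMatrix S i j).coeff (if (i : ℕ) < e then D else 0) =
        if (i : ℕ) < e then (if (j : ℕ) = i then 1 else 0)
        else (if (i : ℕ) - e ≤ j ∧ (j : ℕ) ≤ i then Q.coeff (i - j) else 0) := by
    rw [AlgEquiv.mapMatrix_apply, Matrix.map_apply, hS]
    by_cases hi : (i : ℕ) < e
    · simp only [if_pos hi]
      split_ifs with hband hji hji
      · rw [swap_C, coeff_map, hP.coeff_coeff, if_pos (by omega), map_one]
      · rw [swap_C, coeff_map, hP.coeff_coeff, if_neg (by omega), map_zero]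
      · omega
      · simp
    · simp only [if_neg hi]
      split_ifs <;> simp [swap_map_C]
  refine ⟨?_, ?_, ?_⟩
  · rw [hres, mul_comm]
    exact natDegree_det_sylvesterMatrix_map_le (natDegree_coeff_le_of_natDegree_swap_le hQswap)
  · rw [hres, AlgEquiv.map_det, ← hsum]
    exact Matrix.natDegree_det_le_sum_s14 _ _ hx
  · rw [hres, AlgEquiv.map_det, ← hsum, Matrix.coeff_det_sum_eq_det _ _ hx,
      Matrix.det_of_isLowerTriangular]
    · simp only [Matrix.of_apply, htop, le_refl, Nat.sub_le, and_true, if_true, Nat.sub_self, hQ0,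
        Fin.prod_ite_val_lt, one_pow, one_mul, hsum, pow_mul]
    · intro i j hij
      have hij : (i : ℕ) < j := OrderDual.toDual_lt_toDual.mp hij
      simp only [Matrix.of_apply, htop]
      split_ifs <;> first | rfl | omega

theorem natDegree_eval_X_le (hP : CornerMonic D P) : (P.eval X).natDegree ≤ 2 * D := by
  rw [eval_eq_sum_range' (Nat.lt_succ_of_le hP.1)]
  refine natDegree_sum_le_of_forall_le _ _ fun j hj => natDegree_mul_le.trans ?_
  have := hP.natDegree_coeff_le j
  have := mem_range.mp hj
  have := natDegree_X_pow_le (R := R) j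
  omega

theorem coeff_eval_X (hP : CornerMonic D P) : (P.eval X).coeff (2 * D) = 1 := by
  rw [eval_eq_sum_range' (Nat.lt_succ_of_le hP.1), finsetSum_coeff,
    sum_eq_single_of_mem D (self_mem_range_succ D)]
  · rw [coeff_mul_X_pow', if_pos (by omega), show 2 * D - D = D by omega, hP.coeff_coeff,
      if_pos rfl]
  · intro j hj hjD
    have := mem_range.mp hj
    rw [coeff_mul_X_pow', if_pos (by omega)]
    exact coeff_eq_zero_of_natDegree_lt ((hP.natDegree_coeff_le j).trans_lt (by omega))

end CornerMonic

theorem swap_fIter : swap fIter = C (X ^ 4) * (X - 1) ^ 4 + 8 * X * (X ^ 2 + 1) := by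
  simp [fIter, swap_C, swap_Y]

theorem natDegree_fIter_le : fIter.natDegree ≤ 4 := by
  unfold fIter
  compute_degree

theorem natDegree_swap_fIter : (swap fIter).natDegree = 4 := by
  rw [swap_fIter]
  compute_degree!

theorem coeff_swap_fIter_zero : (swap fIter).coeff 0 = X ^ 4 := by
  norm_num [swap_fIter, coeff_zero_eq_eval_zero]

theorem coeff_swap_fIter_four : (swap fIter).coeff 4 = X ^ 4 := by
  have h : (X - 1 : ℤ[X][Y]) ^ 4 = X ^ 4 - C 4 * X ^ 3 + C 6 * X ^ 2 - C 4 * X + 1 := by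
    simp only [map_ofNat]
    ring
  rw [swap_fIter, h, coeff_add, coeff_C_mul,
    coeff_eq_zero_of_natDegree_lt (p := 8 * X * (X ^ 2 + 1)) (by compute_degree!)]
  simp [coeff_one]

theorem fRes_eq_map_swap_fIter : fRes = (swap fIter).map (mapRingHom C) := by
  simp [swap_fIter, fRes]

theorem cornerMonic_RIter (k : ℕ) : CornerMonic (4 ^ (k + 1)) (RIter k) := by
  induction k with
  | zero => exact ⟨natDegree_fIter_le, natDegree_swap_fIter.le, coeff_swap_fIter_four⟩
  | succ k ih =>
    rw [pow_succ', RIter, fRes_eq_map_swap_fIter]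
    exact ih.resultant_map natDegree_swap_fIter (by rw [swap_swap_apply]; exact natDegree_fIter_le)
      coeff_swap_fIter_zero

/-- For `n ≥ 1`, the iterated resultant `R_n(x) = R⁽ⁿ⁾(x, x)` is a monic polynomial
in `ℤ[x]` of degree `2·4ⁿ`. -/
theorem stmt_14 (n : ℕ) (hn : 1 ≤ n) :
    ((RIter (n - 1)).eval (X : Polynomial ℤ)).Monic ∧
    ((RIter (n - 1)).eval (X : Polynomial ℤ)).natDegree = 2 * 4 ^ n := by
  obtain ⟨k, rfl⟩ := Nat.exists_eq_add_of_le' hn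
  have h := cornerMonic_RIter k
  rw [Nat.add_sub_cancel]
  exact ⟨monic_of_natDegree_le_of_coeff_eq_one _ h.natDegree_eval_X_le h.coeff_eval_X,
    natDegree_eq_of_le_of_coeff_ne_zero h.natDegree_eval_X_le (by simp [h.coeff_eval_X])⟩
end

section
/- If α, β satisfy 16α^4 + 16β^4 = α^4 β^4 (with α, β nonzero and α^4 ≠ 16), then j_2(α) = j_2(β), where j_2(z) = (z^8 − 16z^4 + 256)^3 / (z^8 (z^4 − 16)^2). -/
/-- If `16α^4 + 16β^4 = α^4 β^4` with `α, β ≠ 0` and `α^4 ≠ 16`, then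
`j_2(α) = j_2(β)`, where `j_2(z) = (z^8 - 16z^4 + 256)^3 / (z^8 (z^4 - 16)^2)`. -/
theorem stmt_15 {K : Type*} [Field K] [CharZero K] (α β : K)
    (hα : α ≠ 0) (hβ : β ≠ 0) (hα16 : α ^ 4 ≠ 16)
    (h : 16 * α ^ 4 + 16 * β ^ 4 = α ^ 4 * β ^ 4) :
    (α ^ 8 - 16 * α ^ 4 + 256) ^ 3 / (α ^ 8 * (α ^ 4 - 16) ^ 2) =
      (β ^ 8 - 16 * β ^ 4 + 256) ^ 3 / (β ^ 8 * (β ^ 4 - 16) ^ 2) := by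
  set a := α ^ 4 with ha
  set b := β ^ 4 with hb
  have hβ16 : b ≠ 16 := by
    intro hb16
    rw [hb16] at h
    have : (256 : K) = 0 := by linear_combination h
    norm_num at this
  have hd1 : α ^ 8 * (a - 16) ^ 2 ≠ 0 := by
    apply mul_ne_zero (pow_ne_zero _ hα)
    exact pow_ne_zero _ (sub_ne_zero_of_ne hα16)
  have hd2 : β ^ 8 * (b - 16) ^ 2 ≠ 0 := by
    apply mul_ne_zero (pow_ne_zero _ hβ)
    exact pow_ne_zero _ (sub_ne_zero_of_ne hβ16)
  rw [div_eq_div_iff hd1 hd2]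
  have ha8 : α ^ 8 = a ^ 2 := by rw [ha]; ring
  have hb8 : β ^ 8 = b ^ 2 := by rw [hb]; ring
  rw [ha8, hb8]
  linear_combination (268435456*b - 33554432*b^2 + 1048576*b^3 - 268435456*a
    + 3145728*a*b^2 - 131072*a*b^3 + 33554432*a^2 - 3145728*a^2*b - 8192*a^2*b^3
    + 768*a^2*b^4 - 16*a^2*b^5 - 1048576*a^3 + 131072*a^3*b + 8192*a^3*b^2
    - 32*a^3*b^4 + a^3*b^5 - 768*a^4*b^2 + 32*a^4*b^3 + 16*a^5*b^2 - a^5*b^3) * h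
end

section
/- The points (0, −1/β^4), (−1/4, 1/8 − 1/β^4), and (−4/β^4, 1/β^4) are the three points of order 2 on the elliptic curve E_2(β): Y² + XY + (2/β^4)Y = X³ + (4/β^4)X² − 1/β^8, over a field of characteristic 0 with β ≠ 0 and β^4 ≠ 16. -/
/-! Solving the order-two condition `2y + x + 2/β⁴ = 0` for `y` and substituting into the curve
equation leaves, after clearing denominators, the cubic `x (4x + 1) (β⁴x + 4) = 0`, whose three
roots are the abscissae of the stated points. -/

section

variable {K : Type*} [Field K] {b x y : K}

theorem cubic_eq_zero_of_two_torsion (hb : b ≠ 0)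
    (hE : y ^ 2 + x * y + (2 / b) * y = x ^ 3 + (4 / b) * x ^ 2 - 1 / b ^ 2)
    (hT : 2 * y + x + 2 / b = 0) :
    x * (4 * x + 1) * (b * x + 4) = 0 := by
  have hT' : 2 * b * y + b * x + 2 = 0 := by
    field_simp at hT
    linear_combination hT
  have hcubic : b ^ 3 * (x * (4 * x + 1) * (b * x + 4)) = 0 := by
    field_simp at hE
    linear_combination (-4 * b ^ 2) * hE + (b ^ 2 * (2 * b * y + b * x + 2)) * hT'
  exact (mul_eq_zero.mp hcubic).resolve_left (pow_ne_zero 3 hb)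

variable [CharZero K]

theorem two_torsion_iff (hb : b ≠ 0) :
    (y ^ 2 + x * y + (2 / b) * y = x ^ 3 + (4 / b) * x ^ 2 - 1 / b ^ 2 ∧
        2 * y + x + 2 / b = 0) ↔
      ((x, y) = (0, -1 / b) ∨ (x, y) = (-1 / 4, 1 / 8 - 1 / b) ∨
        (x, y) = (-4 / b, 1 / b)) := by
  simp only [Prod.mk.injEq]
  constructor
  · rintro ⟨hE, hT⟩
    have hy : y = -(x + 2 / b) / 2 := by linear_combination hT / 2
    rcases mul_eq_zero.mp (cubic_eq_zero_of_two_torsion hb hE hT) with h | h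
    · rcases mul_eq_zero.mp h with hx | hx
      · exact Or.inl ⟨hx, by rw [hy, hx]; ring⟩
      · have hx : x = -1 / 4 := by linear_combination hx / 4
        exact Or.inr (Or.inl ⟨hx, by rw [hy, hx]; ring⟩)
    · have hx : x = -4 / b := by field_simp; linear_combination h
      exact Or.inr (Or.inr ⟨hx, by rw [hy, hx]; field_simp; ring⟩)
  · rintro (⟨rfl, rfl⟩ | ⟨rfl, rfl⟩ | ⟨rfl, rfl⟩) <;> constructor <;> field_simp <;> ring

end

theorem stmt_19_general {K : Type*} [Field K] [CharZero K] (β : K) (hβ : β ≠ 0)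
    (x y : K) :
    (y ^ 2 + x * y + (2 / β ^ 4) * y = x ^ 3 + (4 / β ^ 4) * x ^ 2 - 1 / β ^ 8 ∧
        2 * y + x + 2 / β ^ 4 = 0) ↔
      ((x, y) = (0, -1 / β ^ 4) ∨ (x, y) = (-1 / 4, 1 / 8 - 1 / β ^ 4) ∨
        (x, y) = (-4 / β ^ 4, 1 / β ^ 4)) := by
  rw [show β ^ 8 = (β ^ 4) ^ 2 by ring]
  exact two_torsion_iff (pow_ne_zero 4 hβ)

/-- The points `(0, −1/β⁴)`, `(−1/4, 1/8 − 1/β⁴)`, `(−4/β⁴, 1/β⁴)` are exactly the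
points of order `2` on `E_2(β) : Y² + XY + (2/β⁴)Y = X³ + (4/β⁴)X² − 1/β⁸` over a
field of characteristic `0` with `β ≠ 0`, `β⁴ ≠ 16`.  A point `(x,y)` on the curve has
order `2` iff `2y + x + a₃ = 0`, with `a₃ = 2/β⁴`. -/
theorem stmt_19 {K : Type*} [Field K] [CharZero K] (β : K) (hβ : β ≠ 0)
    (hβ16 : β ^ 4 ≠ 16) (x y : K) :
    (y ^ 2 + x * y + (2 / β ^ 4) * y = x ^ 3 + (4 / β ^ 4) * x ^ 2 - 1 / β ^ 8 ∧
        2 * y + x + 2 / β ^ 4 = 0) ↔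
      ((x, y) = (0, -1 / β ^ 4) ∨ (x, y) = (-1 / 4, 1 / 8 - 1 / β ^ 4) ∨
        (x, y) = (-4 / β ^ 4, 1 / β ^ 4)) :=
  stmt_19_general β hβ x y
end
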